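/- Let n be even. In R = Π_{Ã_{n-1}}, with s_1 = Σ_{i even}(α_i + α_{i+1}*), s_1' = Σ_{i odd}(α_i + α_{i+1}*), s_2 = Σ_{i even}(α_i α_{i+1} + α_{i+1}* α_i*), s_2' = Σ_{i odd}(α_i α_{i+1} + α_{i+1}* α_i*), the relations s_2 s_1 = s_1 s_2' and s_2' s_1' = s_1' s_2 hold. -/

import Mathlib

open scoped BigOperators

/-- Generators of the path algebra of the double of the extended Dynkin quiver Ã_{n-1}:
vertex idempotents `vtx i`, nonstar arrows `arr i : e_i → e_{i+1}`,
star arrows `star i : e_{i+1} → e_i`. -/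
inductive PPGen (n : ℕ) : Type
  | vtx (i : ZMod n)
  | arr (i : ZMod n)
  | star (i : ZMod n)

variable (K : Type) [Field K] (n : ℕ) [NeZero n]

abbrev PPFree := FreeAlgebra K (PPGen n)

noncomputable def E (i : ZMod n) : PPFree K n := FreeAlgebra.ι K (PPGen.vtx i)
noncomputable def A (i : ZMod n) : PPFree K n := FreeAlgebra.ι K (PPGen.arr i)
noncomputable def S (i : ZMod n) : PPFree K n := FreeAlgebra.ι K (PPGen.star i)

/-- Defining relations of the preprojective algebra Π_{Ã_{n-1}}: the path-algebra
relations for the double quiver, together with the preprojective relation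
Ω = Σ_i (α_i α_i* − α_i* α_i) = 0. -/
inductive PPRel : PPFree K n → PPFree K n → Prop
  | vtx_mul (i j : ZMod n) :
      PPRel (E K n i * E K n j) (if i = j then E K n i else 0)
  | vtx_sum : PPRel (∑ i : ZMod n, E K n i) 1
  | arr_left (i : ZMod n) : PPRel (E K n i * A K n i) (A K n i)
  | arr_right (i : ZMod n) : PPRel (A K n i * E K n (i + 1)) (A K n i)
  | arr_left' (i j : ZMod n) : j ≠ i → PPRel (E K n j * A K n i) 0
  | arr_right' (i j : ZMod n) : j ≠ i + 1 → PPRel (A K n i * E K n j) 0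
  | star_left (i : ZMod n) : PPRel (E K n (i + 1) * S K n i) (S K n i)
  | star_right (i : ZMod n) : PPRel (S K n i * E K n i) (S K n i)
  | star_left' (i j : ZMod n) : j ≠ i + 1 → PPRel (E K n j * S K n i) 0
  | star_right' (i j : ZMod n) : j ≠ i → PPRel (S K n i * E K n j) 0
  | preproj :
      PPRel (∑ i : ZMod n, (A K n i * S K n i - S K n i * A K n i)) 0

/-- The preprojective algebra Π_{Ã_{n-1}}. -/
abbrev Preproj := RingQuot (PPRel K n)

/-- The canonical projection from the free algebra onto Π_{Ã_{n-1}}. -/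
noncomputable def pp : PPFree K n →ₐ[K] Preproj K n := RingQuot.mkAlgHom K (PPRel K n)

/-- `aPath i ℓ` is the pure nonstar path α_i α_{i+1} ⋯ α_{i+ℓ-1} (with `aPath i 0 = e_i`). -/
noncomputable def aPath (i : ZMod n) : ℕ → PPFree K n
  | 0 => E K n i
  | (ℓ + 1) => A K n i * aPath (i + 1) ℓ

/-- `sPath j m` is the pure star path α_{j-1}* α_{j-2}* ⋯ α_{j-m}* starting at vertex j
(with `sPath j 0 = e_j`). -/
noncomputable def sPath (j : ZMod n) : ℕ → PPFree K n
  | 0 => E K n j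
  | (m + 1) => S K n (j - 1) * sPath (j - 1) m

/-- The canonical-form path with source e_i consisting of ℓ nonstar arrows followed by
m star arrows, as an element of Π_{Ã_{n-1}}. -/
noncomputable def cpath (i : ZMod n) (ℓ m : ℕ) : Preproj K n :=
  pp K n (aPath K n i ℓ * sPath K n (i + (ℓ : ZMod n)) m)

/-- The orbit sum O(ℓ,m): the sum over all paths in B_{ℓ,m} = Q_ℓQ_m* ∪ Q_mQ_ℓ*. -/
noncomputable def OO (ℓ m : ℕ) : Preproj K n :=
  if ℓ = m then ∑ i : ZMod n, cpath K n i ℓ ℓ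
  else ∑ i : ZMod n, (cpath K n i ℓ m + cpath K n i m ℓ)

variable (m : ℕ)

/-- The even vertex index 2j in ZMod n (n = 2m even). -/
def ev (j : Fin m) : ZMod n := ((2 * (j : ℕ) : ℕ) : ZMod n)

/-- s_1 = Σ_{i even} (α_i + α_{i+1}*). -/
noncomputable def s1e : Preproj K n :=
  ∑ j : Fin m, pp K n (A K n (ev n m j) + S K n (ev n m j + 1))

/-- s_1' = Σ_{i odd} (α_i + α_{i+1}*). -/
noncomputable def s1o : Preproj K n :=
  ∑ j : Fin m, pp K n (A K n (ev n m j + 1) + S K n (ev n m j + 2))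

/-- s_2 = Σ_{i even} (α_i α_{i+1} + α_{i+1}* α_i*). -/
noncomputable def s2e : Preproj K n :=
  ∑ j : Fin m, pp K n (A K n (ev n m j) * A K n (ev n m j + 1) +
    S K n (ev n m j + 1) * S K n (ev n m j))

/-- s_2' = Σ_{i odd} (α_i α_{i+1} + α_{i+1}* α_i*). -/
noncomputable def s2o : Preproj K n :=
  ∑ j : Fin m, pp K n (A K n (ev n m j + 1) * A K n (ev n m j + 2) +
    S K n (ev n m j + 2) * S K n (ev n m j + 1))

/-! Let `X` be a set of vertices with `X + 2 = X`, and let `s₁, s₂` be the sums of the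
paths of length one and two (of each orientation) starting in `X`. Since arrows that do not
compose multiply to zero, both `s₂ s₁` and `s₁ s₂'` (where `s₂'` starts in `X + 1`) collapse
to sums over `x ∈ X` of four paths of length three. Two of them, `α_x α_{x+1} α_{x+2}` and its
star analogue, occur on both sides; the preprojective relation `α_{i+1} α_{i+1}* = α_i* α_i`
turns the other two into the loops `α_x α_x* α_x` and `α_{x+1}* α_{x+1} α_{x+1}*`, on one side
at `x` and on the other at `x + 2`, which is the same sum over `X`. Taking `X` the even, resp.
odd, vertices gives the two relations. -/

noncomputable def idem (i : ZMod n) : Preproj K n := pp K n (E K n i)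
noncomputable def arrow (i : ZMod n) : Preproj K n := pp K n (A K n i)
noncomputable def coarrow (i : ZMod n) : Preproj K n := pp K n (S K n i)

local notation "α" => arrow K n
local notation "α*" => coarrow K n

section Relations

theorem pp_eq_of_rel {x y : PPFree K n} (h : PPRel K n x y) : pp K n x = pp K n y :=
  RingQuot.mkAlgHom_rel K h

theorem idem_mul_arrow (i : ZMod n) : idem K n i * α i = α i := by
  simpa only [idem, arrow, map_mul] using pp_eq_of_rel K n (.arr_left i)

theorem arrow_mul_idem (i : ZMod n) : α i * idem K n (i + 1) = α i := by
  simpa only [idem, arrow, map_mul] using pp_eq_of_rel K n (.arr_right i)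

theorem idem_mul_coarrow (i : ZMod n) : idem K n (i + 1) * α* i = α* i := by
  simpa only [idem, coarrow, map_mul] using pp_eq_of_rel K n (.star_left i)

theorem coarrow_mul_idem (i : ZMod n) : α* i * idem K n i = α* i := by
  simpa only [idem, coarrow, map_mul] using pp_eq_of_rel K n (.star_right i)

theorem idem_mul_arrow_of_ne {i j : ZMod n} (h : j ≠ i) : idem K n j * α i = 0 := by
  simpa only [idem, arrow, map_mul, map_zero] using pp_eq_of_rel K n (.arr_left' i j h)

theorem idem_mul_coarrow_of_ne {i j : ZMod n} (h : j ≠ i + 1) : idem K n j * α* i = 0 := by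
  simpa only [idem, coarrow, map_mul, map_zero] using pp_eq_of_rel K n (.star_left' i j h)

theorem arrow_mul_arrow_of_ne {i j : ZMod n} (h : j ≠ i + 1) : α i * α j = 0 := by
  rw [← arrow_mul_idem, mul_assoc, idem_mul_arrow_of_ne K n h.symm, mul_zero]

theorem arrow_mul_coarrow_of_ne {i j : ZMod n} (h : j ≠ i) : α i * α* j = 0 := by
  rw [← arrow_mul_idem, mul_assoc,
    idem_mul_coarrow_of_ne K n fun e => h (add_right_cancel e).symm, mul_zero]

theorem coarrow_mul_arrow_of_ne {i j : ZMod n} (h : j ≠ i) : α* i * α j = 0 := by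
  rw [← coarrow_mul_idem, mul_assoc, idem_mul_arrow_of_ne K n h.symm, mul_zero]

theorem coarrow_mul_coarrow_of_ne {i j : ZMod n} (h : j + 1 ≠ i) : α* i * α* j = 0 := by
  rw [← coarrow_mul_idem, mul_assoc, idem_mul_coarrow_of_ne K n h.symm, mul_zero]

theorem arrow_mul_coarrow_add_one (i : ZMod n) : α (i + 1) * α* (i + 1) = α* i * α i := by
  have hΩ : ∑ k, (α k * α* k - α* k * α k) = 0 := by
    simpa only [arrow, coarrow, map_sum, map_sub, map_mul, map_zero] using
      pp_eq_of_rel K n .preproj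
  -- in `e_{i+1} Ω e_{i+1}` only the summands at `k = i + 1` and `k = i` survive
  have h := congrArg (fun z => idem K n (i + 1) * z * idem K n (i + 1)) hΩ
  simp only [Finset.mul_sum, Finset.sum_mul, mul_sub, sub_mul, mul_zero, zero_mul,
    Finset.sum_sub_distrib, ← mul_assoc] at h
  rwa [Finset.sum_eq_single (i + 1), Finset.sum_eq_single i, sub_eq_zero, idem_mul_arrow,
    mul_assoc, coarrow_mul_idem, idem_mul_coarrow, mul_assoc, arrow_mul_idem] at h
  · intro k _ hk
    rw [idem_mul_coarrow_of_ne K n (fun h => hk (add_right_cancel h).symm), zero_mul, zero_mul]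
  · simp
  · intro k _ hk
    rw [idem_mul_arrow_of_ne K n (Ne.symm hk), zero_mul, zero_mul]
  · simp

theorem arrow_mul_coarrow_add_two (i : ZMod n) :
    α (i + 2) * α* (i + 2) = α* (i + 1) * α (i + 1) := by
  rw [← arrow_mul_coarrow_add_one, add_assoc, one_add_one_eq_two]

end Relations

theorem Fintype.sum_mul_sum_eq_sum_of_mul_eq_zero {ι R : Type*} [Fintype ι]
    [NonUnitalNonAssocSemiring R] {f g : ι → R} (σ : ι → ι)
    (h : ∀ j k, k ≠ σ j → f j * g k = 0) :
    (∑ j, f j) * ∑ k, g k = ∑ j, f j * g (σ j) := by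
  rw [Fintype.sum_mul_sum]
  exact Finset.sum_congr rfl fun j _ =>
    Finset.sum_eq_single _ (fun k _ hk => h j k hk) (by simp)

theorem Fintype.sum_mul_sum_eq_sum_of_mul_eq_zero' {ι R : Type*} [Fintype ι]
    [NonUnitalNonAssocSemiring R] {f g : ι → R} (σ : ι → ι)
    (h : ∀ j k, j ≠ σ k → f j * g k = 0) :
    (∑ j, f j) * ∑ k, g k = ∑ k, f (σ k) * g k := by
  rw [Fintype.sum_mul_sum, Finset.sum_comm]
  exact Finset.sum_congr rfl fun k _ =>
    Finset.sum_eq_single _ (fun j _ hj => h j k hj) (by simp)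

theorem ev_injective {n m : ℕ} (hn : n = 2 * m) : Function.Injective (ev n m) := by
  intro j k h
  rw [ev, ev, ZMod.natCast_eq_natCast_iff, hn] at h
  exact Fin.ext <|
    Nat.ModEq.eq_of_lt_of_lt (Nat.ModEq.mul_left_cancel' two_ne_zero h) j.isLt k.isLt

theorem ev_add_one {n m : ℕ} [NeZero m] (hn : n = 2 * m) (j : Fin m) :
    ev n m (j + 1) = ev n m j + 2 := by
  have h : ((2 * ((j : ℕ) + 1) : ℕ) : ZMod n) = ev n m j + 2 := by
    rw [ev]; push_cast; ring
  rw [← h, ev, ZMod.natCast_eq_natCast_iff, hn, Fin.val_add, Fin.val_one']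
  exact .mul_left' 2 ((Nat.mod_modEq _ m).trans (.add_left _ (Nat.mod_modEq 1 m)))

section OrbitSums

variable {ι : Type*} [Fintype ι]

noncomputable def s1Sum (x : ι → ZMod n) : Preproj K n :=
  ∑ j, (α (x j) + α* (x j + 1))

noncomputable def s2Sum (x : ι → ZMod n) : Preproj K n :=
  ∑ j, (α (x j) * α (x j + 1) + α* (x j + 1) * α* (x j))

theorem s2Sum_comp_equiv (x : ι → ZMod n) (τ : ι ≃ ι) :
    s2Sum K n (x ∘ τ) = s2Sum K n x :=
  τ.sum_comp fun j => α (x j) * α (x j + 1) + α* (x j + 1) * α* (x j)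

theorem s2Sum_mul_s1Sum_eq_sum {x : ι → ZMod n} (hx : Function.Injective x) {τ : ι ≃ ι}
    (hτ : ∀ j, x (τ j) = x j + 2) :
    s2Sum K n x * s1Sum K n x =
      ∑ j, (α (x j) * α (x j + 1) * α (x j + 2)
        + α* (x j + 1) * α (x j + 1) * α* (x j + 1) + α (x j) * α* (x j) * α (x j)
        + α* (x j + 3) * α* (x j + 2) * α* (x j + 1)) := by
  simp only [s2Sum, s1Sum, Finset.sum_add_distrib, add_mul, mul_add]
  rw [Fintype.sum_mul_sum_eq_sum_of_mul_eq_zero τ, Fintype.sum_mul_sum_eq_sum_of_mul_eq_zero id,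
    Fintype.sum_mul_sum_eq_sum_of_mul_eq_zero id, Fintype.sum_mul_sum_eq_sum_of_mul_eq_zero' τ]
  · simp only [id, add_assoc, hτ, two_add_one_eq_three]
    congr 2
    · refine Finset.sum_congr rfl fun j _ => ?_
      rw [mul_assoc, ← arrow_mul_coarrow_add_one, ← mul_assoc]
    · congr 1
      refine Finset.sum_congr rfl fun j _ => ?_
      rw [mul_assoc, arrow_mul_coarrow_add_one, ← mul_assoc]
  · intro j k h
    rw [mul_assoc,
      coarrow_mul_coarrow_of_ne K n fun e => h (hx (by rw [hτ]; linear_combination -e)), mul_zero]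
  · intro j k (h : k ≠ j)
    rw [mul_assoc, arrow_mul_coarrow_of_ne K n fun e => h (hx (add_right_cancel e)), mul_zero]
  · intro j k (h : k ≠ j)
    rw [mul_assoc, coarrow_mul_arrow_of_ne K n (hx.ne h), mul_zero]
  · intro j k h
    rw [mul_assoc, arrow_mul_arrow_of_ne K n fun e => h (hx (by rw [hτ]; linear_combination e)),
      mul_zero]

theorem s1Sum_mul_s2Sum_eq_sum {x : ι → ZMod n} (hx : Function.Injective x) {τ : ι ≃ ι}
    (hτ : ∀ j, x (τ j) = x j + 2) :
    s1Sum K n x * s2Sum K n (fun j => x j + 1) =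
      ∑ j, (α (x j) * α (x j + 1) * α (x j + 2) + α (x j + 2) * α* (x j + 2) * α (x j + 2)
        + α* (x j + 1) * α (x j + 1) * α* (x j + 1)
        + α* (x j + 3) * α* (x j + 2) * α* (x j + 1)) := by
  simp only [s2Sum, s1Sum, Finset.sum_add_distrib, add_mul, mul_add]
  rw [Fintype.sum_mul_sum_eq_sum_of_mul_eq_zero id, Fintype.sum_mul_sum_eq_sum_of_mul_eq_zero id,
    Fintype.sum_mul_sum_eq_sum_of_mul_eq_zero' τ, Fintype.sum_mul_sum_eq_sum_of_mul_eq_zero' τ]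
  · rw [← add_assoc]
    simp only [id, hτ, ← mul_assoc, add_assoc, one_add_one_eq_two, two_add_one_eq_three]
    congr 2
    · refine Finset.sum_congr rfl fun j _ => ?_
      rw [← arrow_mul_coarrow_add_two]
    · congr 1
      refine Finset.sum_congr rfl fun j _ => ?_
      rw [arrow_mul_coarrow_add_two]
  · intro j k h
    rw [← mul_assoc,
      coarrow_mul_coarrow_of_ne K n fun e => h (hx (by rw [hτ]; linear_combination -e)), zero_mul]
  · intro j k h
    rw [← mul_assoc,
      arrow_mul_coarrow_of_ne K n fun e => h (hx (by rw [hτ]; linear_combination -e)), zero_mul]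
  · intro j k (h : k ≠ j)
    rw [← mul_assoc, coarrow_mul_arrow_of_ne K n fun e => h (hx (add_right_cancel e)), zero_mul]
  · intro j k (h : k ≠ j)
    rw [← mul_assoc, arrow_mul_arrow_of_ne K n fun e => h (hx (add_right_cancel e)), zero_mul]

theorem s2Sum_mul_s1Sum {x : ι → ZMod n} (hx : Function.Injective x) {τ : ι ≃ ι}
    (hτ : ∀ j, x (τ j) = x j + 2) :
    s2Sum K n x * s1Sum K n x = s1Sum K n x * s2Sum K n (fun j => x j + 1) := by
  have hshift : ∑ j, α (x j + 2) * α* (x j + 2) * α (x j + 2) =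
      ∑ j, α (x j) * α* (x j) * α (x j) := by
    simp only [← hτ]
    exact τ.sum_comp fun j => α (x j) * α* (x j) * α (x j)
  rw [s2Sum_mul_s1Sum_eq_sum K n hx hτ, s1Sum_mul_s2Sum_eq_sum K n hx hτ]
  simp only [Finset.sum_add_distrib, hshift]
  abel

end OrbitSums

theorem s1e_eq_s1Sum : s1e K n m = s1Sum K n (ev n m) := by
  simp only [s1e, s1Sum, arrow, coarrow, map_add]

theorem s2e_eq_s2Sum : s2e K n m = s2Sum K n (ev n m) := by
  simp only [s2e, s2Sum, arrow, coarrow, map_add, map_mul]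

theorem s1o_eq_s1Sum : s1o K n m = s1Sum K n (fun j => ev n m j + 1) := by
  simp only [s1o, s1Sum, arrow, coarrow, map_add, add_assoc, one_add_one_eq_two]

theorem s2o_eq_s2Sum : s2o K n m = s2Sum K n (fun j => ev n m j + 1) := by
  simp only [s2o, s2Sum, arrow, coarrow, map_add, map_mul, add_assoc, one_add_one_eq_two]

theorem statement16 (hn : n = 2 * m) :
    s2e K n m * s1e K n m = s1e K n m * s2o K n m ∧
    s2o K n m * s1o K n m = s1o K n m * s2e K n m := by
  have : NeZero m := ⟨by rintro rfl; exact NeZero.ne n hn⟩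
  have hev : ∀ j, ev n m (Equiv.addRight 1 j) = ev n m j + 2 := ev_add_one hn
  have hev' : ∀ j, ev n m (Equiv.addRight 1 j) + 1 = ev n m j + 1 + 2 := fun j => by
    rw [hev, add_right_comm]
  have hwrap : s2Sum K n (fun j => ev n m j + 1 + 1) = s2Sum K n (ev n m) := by
    simpa only [Function.comp_def, hev, add_assoc, one_add_one_eq_two] using
      s2Sum_comp_equiv K n (ev n m) (Equiv.addRight 1)
  rw [s1e_eq_s1Sum, s2e_eq_s2Sum, s1o_eq_s1Sum, s2o_eq_s2Sum]
  refine ⟨s2Sum_mul_s1Sum K n (ev_injective hn) hev, ?_⟩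
  rw [s2Sum_mul_s1Sum K n (x := fun j => ev n m j + 1)
    ((add_left_injective 1).comp (ev_injective hn)) hev', hwrap]
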